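/- Let μ > 0, 0 < d < 1/2, and r ∈ ℝ. Consider h(w, z) = (1/2)(w − r)² + μz + d(w²/z − w²) for w ∈ ℝ and z ∈ (0, 1], with h(0, 0) = (1/2)r² and h(w, 0) = +∞ for w ≠ 0. Then the infimum of h over w ∈ ℝ, z ∈ [0,1] equals φ̄(r; d), i.e., it equals (1/2)r² if |r| ≤ 2√(μd); (−d r² + 2√(μd)|r| − 2μd)/(1 − 2d) if 2√(μd) < |r| < √(μ/d); and μ if |r| ≥ √(μ/d). -/

import Mathlib

/-- The perspective-relaxation loss φ̄(r; d) for parameters μ > 0, d ∈ (0,1/2). -/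
noncomputable def phiBar (mu d r : ℝ) : ℝ :=
  if |r| ≤ 2 * Real.sqrt (mu * d) then (1/2) * r^2
  else if |r| < Real.sqrt (mu / d) then
    (-(d * r^2) + 2 * Real.sqrt (mu * d) * |r| - 2 * mu * d) / (1 - 2*d)
  else mu

/-- The objective h(w,z) = (1/2)(w−r)² + μz + d(w²/z − w²), EReal-valued,
with the conventions h(0,0) = (1/2)r² and h(w,0) = +∞ for w ≠ 0. -/
noncomputable def hObj (mu d r w z : ℝ) : EReal :=
  if z = 0 then (if w = 0 then (((1/2) * (w - r)^2 : ℝ) : EReal) else ⊤)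
  else (((1/2) * (w - r)^2 + mu * z + d * (w^2 / z - w^2) : ℝ) : EReal)

/-!
Write μ = d t², so that √(μd) = dt and √(μ/d) = t. For fixed w, the perspective term
μz + d w²/z is at least 2dt|w| (AM-GM, with equality at z = |w|/t), and when |w| ≥ t it is
at least μ + d w² (it decreases on (0, 1]). Hence h(w, z) ≥ μ, or h(w, z) ≥ q(|w|) with
q(a) = ½(a - |r|)² + 2dta - da² and 0 ≤ |w| < t. The convex quadratic q has its minimum on
[0, t] at 0, at (|r| - 2dt)/(1 - 2d), or at t, according to the three regimes of φ̄, and each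
of these values is attained by h.
-/

lemma two_mul_mul_abs_le_perspective {d t z : ℝ} (hd : 0 ≤ d) (hz : 0 < z) (w : ℝ) :
    2 * (d * t) * |w| ≤ d * t^2 * z + d * (w^2 / z) := by
  have key : 2 * (d * t) * |w| * z ≤ d * t^2 * z * z + d * w^2 := by
    nlinarith [mul_nonneg hd (sq_nonneg (t * z - |w|)), sq_abs w]
  calc 2 * (d * t) * |w| ≤ (d * t^2 * z * z + d * w^2) / z := by rwa [le_div_iff₀ hz]
    _ = d * t^2 * z + d * (w^2 / z) := by field_simp

lemma le_perspective_of_le {mu d w z : ℝ} (hd : 0 ≤ d) (hz : 0 < z) (hz1 : z ≤ 1)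
    (hw : mu ≤ d * w^2) :
    mu ≤ mu * z + d * (w^2 / z - w^2) := by
  have hq : mu ≤ d * (w^2 / z) :=
    hw.trans (mul_le_mul_of_nonneg_left (le_div_self (sq_nonneg w) hz hz1) hd)
  have hzw : z * (w^2 / z) = w^2 := mul_div_cancel₀ _ hz.ne'
  -- the excess over `mu` factors as `(1 - z) (d w²/z - mu)`
  nlinarith [mul_nonneg (sub_nonneg.2 hz1) (sub_nonneg.2 hq)]

section Reparametrized

variable {d t : ℝ}

lemma phiBar_mul_sq (hd : 0 < d) (ht : 0 ≤ t) (r : ℝ) :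
    phiBar (d * t^2) d r =
      if |r| ≤ 2 * (d * t) then (1/2) * r^2
      else if |r| < t then (-(d * r^2) + 2 * (d * t) * |r| - 2 * (d * t^2) * d) / (1 - 2*d)
      else d * t^2 := by
  have hs : Real.sqrt (d * t^2 * d) = d * t := by
    rw [show d * t^2 * d = (d * t)^2 by ring, Real.sqrt_sq (by positivity)]
  have ht' : Real.sqrt (d * t^2 / d) = t := by
    rw [mul_div_cancel_left₀ _ hd.ne', Real.sqrt_sq ht]
  rw [phiBar, hs, ht']

lemma phiBar_mul_sq_le (hd : 0 < d) (hd2 : d < 1/2) (ht : 0 ≤ t) (r : ℝ) :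
    phiBar (d * t^2) d r ≤ d * t^2 := by
  have h2d : 0 < 1 - 2 * d := by linarith
  rw [phiBar_mul_sq hd ht]
  split_ifs with h1 h2
  · have hr : r^2 ≤ (2 * (d * t))^2 := by
      rw [← sq_abs r]; exact pow_le_pow_left₀ (abs_nonneg r) h1 2
    nlinarith [mul_nonneg hd.le (sq_nonneg t)]
  · rw [div_le_iff₀ h2d]
    nlinarith [mul_nonneg hd.le (sq_nonneg (|r| - t)), sq_abs r]
  · exact le_rfl

lemma phiBar_mul_sq_le_reduced (hd : 0 < d) (hd2 : d < 1/2) (r : ℝ) {a : ℝ}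
    (ha : 0 ≤ a) (hat : a ≤ t) :
    phiBar (d * t^2) d r ≤ (1/2) * (a - |r|)^2 + 2 * (d * t) * a - d * a^2 := by
  have h2d : 0 < 1 - 2 * d := by linarith
  rw [phiBar_mul_sq hd (ha.trans hat)]
  split_ifs with h1 h2
  · nlinarith [mul_nonneg ha (mul_nonneg h2d.le ha), sq_abs r]
  · rw [div_le_iff₀ h2d]
    nlinarith [sq_nonneg ((1 - 2 * d) * a - (|r| - 2 * (d * t))), sq_abs r]
  · have hra : (t - a)^2 ≤ (|r| - a)^2 :=
      pow_le_pow_left₀ (sub_nonneg.2 hat) (by linarith [not_lt.1 h2]) 2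
    nlinarith [mul_nonneg h2d.le (sq_nonneg (t - a))]

lemma phiBar_mul_sq_le_objective (hd : 0 < d) (hd2 : d < 1/2) (ht : 0 ≤ t)
    (r w : ℝ) {z : ℝ} (hz : 0 < z) (hz1 : z ≤ 1) :
    phiBar (d * t^2) d r ≤ (1/2) * (w - r)^2 + d * t^2 * z + d * (w^2 / z - w^2) := by
  have habs : (|w| - |r|)^2 ≤ (w - r)^2 :=
    sq_le_sq.2 (by simpa using abs_abs_sub_abs_le_abs_sub w r)
  by_cases htw : t ≤ |w|
  · have hw : d * t^2 ≤ d * w^2 := by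
      rw [← sq_abs w]; exact mul_le_mul_of_nonneg_left (pow_le_pow_left₀ ht htw 2) hd.le
    have := le_perspective_of_le hd.le hz hz1 hw
    nlinarith [phiBar_mul_sq_le hd hd2 ht r, sq_nonneg (w - r)]
  · have := phiBar_mul_sq_le_reduced hd hd2 r (abs_nonneg w) (not_le.1 htw).le
    nlinarith [two_mul_mul_abs_le_perspective hd.le hz (t := t) w, sq_abs w]

lemma phiBar_mul_sq_le_hObj (hd : 0 < d) (hd2 : d < 1/2) (ht : 0 ≤ t)
    (r w : ℝ) {z : ℝ} (hz : 0 ≤ z) (hz1 : z ≤ 1) :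
    (phiBar (d * t^2) d r : EReal) ≤ hObj (d * t^2) d r w z := by
  rw [hObj]
  split_ifs with hz0 hw0
  · subst hw0
    exact EReal.coe_le_coe_iff.2 <| by
      simpa using phiBar_mul_sq_le_reduced hd hd2 r le_rfl ht
  · exact le_top
  · exact EReal.coe_le_coe_iff.2 <|
      phiBar_mul_sq_le_objective hd hd2 ht r w (lt_of_le_of_ne hz (Ne.symm hz0)) hz1

lemma exists_hObj_eq_phiBar_mul_sq (hd : 0 < d) (hd2 : d < 1/2) (ht : 0 ≤ t)
    (r : ℝ) :
    ∃ w z : ℝ, 0 ≤ z ∧ z ≤ 1 ∧ (phiBar (d * t^2) d r : EReal) = hObj (d * t^2) d r w z := by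
  have h2d : 0 < 1 - 2 * d := by linarith
  have hphi := phiBar_mul_sq hd ht r
  by_cases h1 : |r| ≤ 2 * (d * t)
  · refine ⟨0, 0, le_rfl, zero_le_one, ?_⟩
    simp [hObj, hphi, h1]
  by_cases h2 : |r| < t
  · set a := (|r| - 2 * (d * t)) / (1 - 2 * d) with ha_def
    have ha : 0 < a := div_pos (by linarith) h2d
    have hat : a < t := by
      rw [ha_def, div_lt_iff₀ h2d]; nlinarith
    have ht0 : 0 < t := ha.trans hat
    have haa : a * (1 - 2 * d) = |r| - 2 * (d * t) := div_mul_cancel₀ _ h2d.ne'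
    -- the AM-GM equality case `z = |w| / t`, with `w` of the sign of `r`
    refine ⟨if 0 ≤ r then a else -a, a / t, by positivity, (div_le_one ht0).2 hat.le, ?_⟩
    have hw2 : (if 0 ≤ r then a else -a)^2 = a^2 := by split_ifs <;> ring
    have hwr : ((if 0 ≤ r then a else -a) - r)^2 = (a - |r|)^2 := by
      split_ifs with hr
      · rw [abs_of_nonneg hr]
      · rw [abs_of_neg (not_le.1 hr)]; ring
    rw [hObj, if_neg (div_pos ha ht0).ne', hw2, hwr, hphi, if_neg h1, if_pos h2,
      EReal.coe_eq_coe_iff, div_eq_iff h2d.ne']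
    field_simp
    nlinarith [sq_abs r]
  · refine ⟨r, 1, zero_le_one, le_rfl, ?_⟩
    rw [hObj, if_neg one_ne_zero, hphi, if_neg h1, if_neg h2, EReal.coe_eq_coe_iff]
    ring

end Reparametrized

theorem stmt_6 (mu d r : ℝ) (hmu : 0 < mu) (hd0 : 0 < d) (hd : d < 1/2) :
    sInf {v : EReal | ∃ w z : ℝ, 0 ≤ z ∧ z ≤ 1 ∧ v = hObj mu d r w z}
      = ((phiBar mu d r : ℝ) : EReal) := by
  obtain ⟨t, ht, rfl⟩ : ∃ t : ℝ, 0 ≤ t ∧ mu = d * t^2 :=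
    ⟨Real.sqrt (mu / d), Real.sqrt_nonneg _, by
      rw [Real.sq_sqrt (div_nonneg hmu.le hd0.le), mul_div_cancel₀ _ hd0.ne']⟩
  refine IsLeast.csInf_eq ⟨exists_hObj_eq_phiBar_mul_sq hd0 hd ht r, ?_⟩
  rintro v ⟨w, z, hz, hz1, rfl⟩
  exact phiBar_mul_sq_le_hObj hd0 hd ht r w hz hz1
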